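/- With the Manoussakis–Pelczar-Barwacz intervals Jₙ = Fₙ ∪ Gₙ (where F₁ = ∅, G₁ < F₂ < G₂ < ⋯ partition ℕ, Gₙ is a union of n successive maximal Schreier sets, and |Fₙ| = Σ_{m<n}|J_m|), define L_N = ⋃_{n∈N} Jₙ for N ⊆ ℕ. Then for infinite M, N ⊆ ℕ, every element of M \ N is at most the Gasparis–Leung index ΓL₁(L_M, L_N). -/

import Mathlib

open Finset Filter

/-- A Schreier set: a finite set of naturals whose cardinality is at most its minimum
(elements are automatically positive when nonempty). -/
def IsSchreier (F : Finset ℕ) : Prop := ∀ h : F.Nonempty, F.card ≤ F.min' h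

/-- A maximal Schreier set: nonempty with cardinality equal to its minimum. -/
def IsMaxSchreier (F : Finset ℕ) : Prop := ∃ h : F.Nonempty, F.card = F.min' h

/-- A (possibly empty) list of nonempty successive Schreier sets. -/
def SchreierChainList (C : List (Finset ℕ)) : Prop :=
  (∀ F ∈ C, IsSchreier F ∧ F.Nonempty) ∧
  C.Chain' (fun F G => ∀ a ∈ F, ∀ b ∈ G, a < b)

/-- A Schreier chain: a nonempty finite list of nonempty successive Schreier sets. -/
def IsSchreierChain (C : List (Finset ℕ)) : Prop := C ≠ [] ∧ SchreierChainList C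

def chainUnion (C : List (Finset ℕ)) : Finset ℕ := C.foldr (· ∪ ·) ∅

noncomputable def mu (p : ℝ) (x : ℕ → ℝ) (F : Finset ℕ) : ℝ :=
  (∑ n ∈ F, |x n| ^ p) ^ (1 / p)

/-- The p-th Schreier norm of a (finitely supported) sequence. -/
noncomputable def schreierNorm (p : ℝ) (x : ℕ → ℝ) : ℝ :=
  sSup {r | ∃ F : Finset ℕ, IsSchreier F ∧ F.Nonempty ∧ r = mu p x F}

noncomputable def betaNorm (p : ℝ) (x : ℕ → ℝ) (C : List (Finset ℕ)) : ℝ :=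
  ((C.map fun F => (∑ n ∈ F, |x n|) ^ p).sum) ^ (1 / p)

/-- The p-th Baernstein norm of a (finitely supported) sequence. -/
noncomputable def baernsteinNorm (p : ℝ) (x : ℕ → ℝ) : ℝ :=
  sSup {r | ∃ C : List (Finset ℕ), IsSchreierChain C ∧ r = betaNorm p x C}

/-- The Schreier covering number of a finite set. -/
noncomputable def tau1 (A : Finset ℕ) : ℕ :=
  sInf {m | ∃ C : List (Finset ℕ), SchreierChainList C ∧ C.length = m ∧ A ⊆ chainUnion C}

/-- Increasing enumeration of a set of naturals (0-indexed). -/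
noncomputable def enumSet (M : Set ℕ) : ℕ → ℕ := Nat.nth (· ∈ M)

/-- `M(J)`: the image of an index set `J` under the increasing enumeration of `M`. -/
noncomputable def subImage (M : Set ℕ) (J : Finset ℕ) : Finset ℕ := J.image (enumSet M)

/-- The Gasparis–Leung index `ΓL₁(M, N) ∈ ℕ ∪ {∞}`. -/
noncomputable def GLindex (M N : Set ℕ) : ℕ∞ :=
  ⨆ J ∈ {J : Finset ℕ | IsSchreier (subImage N J)}, (tau1 (subImage M J) : ℕ∞)

/-! The `m` maximal Schreier sets making up `G m` occupy a run of consecutive positions `J` in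
`L_M`, so `τ₁(L_M(J)) = m`. Since `m ∉ N`, the points of `L_N` up to `max G m` come from the
blocks `n < m` only, and there are at most `|F m|` of them; hence `L_N(J)` starts beyond
`max G m ≥ |J|` and is a Schreier set. -/

@[simp]
lemma chainUnion_nil : chainUnion [] = ∅ := rfl

@[simp]
lemma chainUnion_cons (S : Finset ℕ) (C : List (Finset ℕ)) :
    chainUnion (S :: C) = S ∪ chainUnion C := rfl

lemma mem_chainUnion {a : ℕ} {C : List (Finset ℕ)} : a ∈ chainUnion C ↔ ∃ F ∈ C, a ∈ F := by
  induction C <;> simp_all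

lemma IsMaxSchreier.isSchreier {H : Finset ℕ} (hH : IsMaxSchreier H) : IsSchreier H :=
  fun _ => hH.2.le

lemma IsMaxSchreier.eq_of_subset {H S : Finset ℕ} (hH : IsMaxSchreier H) (hS : IsSchreier S)
    (hHS : H ⊆ S) : H = S := by
  obtain ⟨hne, hcard⟩ := hH
  refine eq_of_subset_of_card_le hHS ?_
  calc S.card ≤ S.min' (hne.mono hHS) := hS _
    _ ≤ H.min' hne := min'_subset _ hHS
    _ = H.card := hcard.symm

lemma SchreierChainList.tail {S : Finset ℕ} {C : List (Finset ℕ)}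
    (hC : SchreierChainList (S :: C)) : SchreierChainList C :=
  ⟨fun F hF => hC.1 F (List.mem_cons_of_mem S hF), hC.2.tail⟩

lemma SchreierChainList.lt_of_mem_chainUnion {S : Finset ℕ} {C : List (Finset ℕ)}
    (hC : SchreierChainList (S :: C)) {a b : ℕ} (ha : a ∈ S) (hb : b ∈ chainUnion C) :
    a < b := by
  induction C generalizing S a with
  | nil => simp at hb
  | cons T C ih =>
    have hST := (List.isChain_cons_cons.mp hC.2).1
    rcases mem_union.mp hb with hbT | hbC
    · exact hST a ha b hbT
    · obtain ⟨t, ht⟩ := (hC.1 T (by simp)).2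
      exact (hST a ha t ht).trans (ih hC.tail ht hbC)

/- If the first set `S` of the chain contained a point `y` beyond the first maximal Schreier
set `H`, it would contain all of `H` (every point of `H` lies below `y`, and later sets of the
chain lie above `y`), hence equal `H` by maximality: absurd. So `S` only helps to cover `H`. -/
lemma length_le_of_chainUnion_subset {Hs C : List (Finset ℕ)}
    (hHs : ∀ H ∈ Hs, IsMaxSchreier H) (hpw : Hs.Pairwise fun F G => ∀ a ∈ F, ∀ b ∈ G, a < b)
    (hC : SchreierChainList C) (hsub : chainUnion Hs ⊆ chainUnion C) :
    Hs.length ≤ C.length := by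
  induction C generalizing Hs with
  | nil =>
    cases Hs with
    | nil => rfl
    | cons H Hs =>
      obtain ⟨x, hx⟩ := (hHs H (by simp)).1
      simpa using hsub (mem_union_left _ hx)
  | cons S C ih =>
    cases Hs with
    | nil => simp
    | cons H Hs =>
      simp only [List.length_cons, add_le_add_iff_right]
      refine ih (fun H' hH' => hHs H' (by simp [hH'])) (List.pairwise_cons.mp hpw).2 hC.tail ?_
      intro y hy
      obtain ⟨H', hH', hyH'⟩ := mem_chainUnion.mp hy
      have hHy : ∀ x ∈ H, x < y := fun x hx => (List.pairwise_cons.mp hpw).1 H' hH' x hx y hyH'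
      refine (mem_union.mp (hsub (by simp [hy]))).resolve_left fun hyS => ?_
      have hHS : H ⊆ S := fun x hx =>
        (mem_union.mp (hsub (by simp [hx]))).resolve_right fun hxC =>
          (hHy x hx).not_gt (hC.lt_of_mem_chainUnion hyS hxC)
      rw [← (hHs H (by simp)).eq_of_subset (hC.1 S (by simp)).1 hHS] at hyS
      exact (hHy y hyS).false

lemma tau1_chainUnion {Hs : List (Finset ℕ)} (hHs : ∀ H ∈ Hs, IsMaxSchreier H)
    (hpw : Hs.Pairwise fun F G => ∀ a ∈ F, ∀ b ∈ G, a < b) :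
    tau1 (chainUnion Hs) = Hs.length := by
  have hmem : Hs.length ∈
      {m | ∃ C, SchreierChainList C ∧ C.length = m ∧ chainUnion Hs ⊆ chainUnion C} :=
    ⟨Hs, ⟨fun H hH => ⟨(hHs H hH).isSchreier, (hHs H hH).1⟩, hpw.isChain⟩, rfl, subset_rfl⟩
  refine le_antisymm (Nat.sInf_le hmem) (le_csInf ⟨_, hmem⟩ ?_)
  rintro _ ⟨C, hC, rfl, hsub⟩
  exact length_le_of_chainUnion_subset hHs hpw hC hsub

lemma tau1_biUnion_of_isMaxSchreier {n : ℕ} {H : Fin n → Finset ℕ}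
    (hH : ∀ i, IsMaxSchreier (H i)) (hlt : ∀ i j, i < j → ∀ a ∈ H i, ∀ b ∈ H j, a < b) :
    tau1 (univ.biUnion H) = n := by
  have hunion : univ.biUnion H = chainUnion (List.ofFn H) := by
    ext x
    simp [mem_chainUnion, List.mem_ofFn]
  rw [hunion, tau1_chainUnion (by simpa [List.mem_ofFn] using hH) (List.pairwise_ofFn.mpr hlt),
    List.length_ofFn]

lemma card_le_count {p : ℕ → Prop} [DecidablePred p] {s : Finset ℕ} {a : ℕ}
    (hs : ∀ x ∈ s, x < a ∧ p x) : s.card ≤ Nat.count p a := by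
  rw [Nat.count_eq_card_filter_range]
  exact card_le_card fun x hx => mem_filter.mpr ⟨mem_range.mpr (hs x hx).1, (hs x hx).2⟩

section Enumeration

variable {L : Set ℕ} [DecidablePred (· ∈ L)]

lemma enumSet_count_add {a i : ℕ} (h : ∀ j ≤ i, a + j ∈ L) :
    enumSet L (Nat.count (· ∈ L) a + i) = a + i := by
  have hcount : Nat.count (· ∈ L) (a + i) = Nat.count (· ∈ L) a + i := by
    rw [Nat.count_add, Nat.count_eq_card_filter_range (fun j => a + j ∈ L),
      filter_true_of_mem fun j hj => h j (mem_range.mp hj).le, card_range]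
  rw [← hcount]
  exact Nat.nth_count (h i le_rfl)

lemma subImage_image_count_add {a b : ℕ} (h : ∀ x ∈ Icc a b, x ∈ L) :
    subImage L ((range (b + 1 - a)).image (Nat.count (· ∈ L) a + ·)) = Icc a b := by
  have hshift : ∀ i < b + 1 - a, enumSet L (Nat.count (· ∈ L) a + i) = a + i :=
    fun i hi => enumSet_count_add fun j hj => h _ (mem_Icc.mpr ⟨by omega, by omega⟩)
  ext y
  simp only [subImage, image_image, mem_image, mem_range, Function.comp_apply, mem_Icc]
  constructor
  · rintro ⟨i, hi, rfl⟩
    rw [hshift i hi]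
    omega
  · rintro ⟨hay, hyb⟩
    exact ⟨y - a, by omega, by rw [hshift _ (by omega)]; omega⟩

lemma isSchreier_subImage (hL : L.Infinite) {c k : ℕ} {s : Finset ℕ}
    (hc : Nat.count (· ∈ L) c ≤ k) (hs : ∀ j ∈ s, k ≤ j) (hcard : s.card ≤ c) :
    IsSchreier (subImage L s) := by
  intro hne
  obtain ⟨j, hj, hmin⟩ := mem_image.mp ((subImage L s).min'_mem hne)
  calc (subImage L s).card ≤ s.card := card_image_le
    _ ≤ c := hcard
    _ ≤ Nat.nth (· ∈ L) k := (Nat.count_le_iff_le_nth (p := (· ∈ L)) hL).mp hc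
    _ ≤ enumSet L j := Nat.nth_monotone hL (hs j hj)
    _ = _ := hmin

end Enumeration

lemma union_lt_union_of_lt {F₁ G₁ F₂ G₂ : Finset ℕ} (h₁ : ∀ a ∈ F₁, ∀ b ∈ G₁, a < b)
    (h₂ : ∀ a ∈ G₁, ∀ b ∈ F₂, a < b) (h₃ : ∀ a ∈ F₂, ∀ b ∈ G₂, a < b)
    (hG₁ : G₁.Nonempty) (hF₂ : F₂.Nonempty) :
    ∀ a ∈ F₁ ∪ G₁, ∀ b ∈ F₂ ∪ G₂, a < b := by
  obtain ⟨g, hg⟩ := hG₁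
  obtain ⟨f, hf⟩ := hF₂
  have hG₁lt : ∀ a ∈ G₁, ∀ b ∈ F₂ ∪ G₂, a < b := by
    intro a ha b hb
    rcases mem_union.mp hb with hb | hb
    · exact h₂ a ha b hb
    · exact (h₂ a ha f hf).trans (h₃ f hf b hb)
  intro a ha b hb
  rcases mem_union.mp ha with ha | ha
  · exact (h₁ a ha g hg).trans (hG₁lt g hg b hb)
  · exact hG₁lt a ha b hb

section Blocks

variable {B : ℕ → Finset ℕ}

lemma lt_of_mem_block (hsucc : ∀ n, 1 ≤ n → ∀ a ∈ B n, ∀ b ∈ B (n + 1), a < b)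
    (hne : ∀ n, 1 ≤ n → (B n).Nonempty) {n n' a b : ℕ} (hn : 1 ≤ n) (hnn' : n < n')
    (ha : a ∈ B n) (hb : b ∈ B n') : a < b := by
  induction n', hnn' using Nat.le_induction generalizing b with
  | base => exact hsucc n hn a ha b hb
  | succ n' hnn' ih =>
    obtain ⟨c, hc⟩ := hne n' (by omega)
    exact (ih hc).trans (hsucc n' (by omega) c hc b hb)

lemma le_add_one_of_mem_block (hsucc : ∀ n, 1 ≤ n → ∀ a ∈ B n, ∀ b ∈ B (n + 1), a < b)
    (hne : ∀ n, 1 ≤ n → (B n).Nonempty) {n y : ℕ} (hn : 1 ≤ n) (hy : y ∈ B n) :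
    n ≤ y + 1 := by
  induction n, hn using Nat.le_induction generalizing y with
  | base => omega
  | succ n hn ih =>
    obtain ⟨z, hz⟩ := hne n hn
    have := hsucc n hn z hz y hy
    have := ih hz
    omega

lemma infinite_biUnion_block (hsucc : ∀ n, 1 ≤ n → ∀ a ∈ B n, ∀ b ∈ B (n + 1), a < b)
    (hne : ∀ n, 1 ≤ n → (B n).Nonempty) {P : Set ℕ} (hP : P.Infinite) :
    (⋃ n ∈ P, (B n : Set ℕ)).Infinite := by
  refine Set.infinite_of_forall_exists_gt fun c => ?_
  obtain ⟨n, hnP, hcn⟩ := hP.exists_gt (c + 1)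
  obtain ⟨y, hy⟩ := hne n (by omega)
  have := le_add_one_of_mem_block hsucc hne (by omega) hy
  exact ⟨y, Set.mem_biUnion hnP (mem_coe.mpr hy), by omega⟩

lemma count_biUnion_block_le (hsucc : ∀ n, 1 ≤ n → ∀ a ∈ B n, ∀ b ∈ B (n + 1), a < b)
    (hne : ∀ n, 1 ≤ n → (B n).Nonempty) {P : Set ℕ} [DecidablePred (· ∈ ⋃ n ∈ P, (B n : Set ℕ))]
    (hP : ∀ n ∈ P, 1 ≤ n) {m b : ℕ} (hm : 1 ≤ m) (hmP : m ∉ P) (hb : b ∈ B m) :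
    Nat.count (· ∈ ⋃ n ∈ P, (B n : Set ℕ)) (b + 1) ≤ ∑ n ∈ Ico 1 m, (B n).card := by
  have hsub : {y ∈ range (b + 1) | y ∈ ⋃ n ∈ P, (B n : Set ℕ)} ⊆ (Ico 1 m).biUnion B := by
    intro y hy
    simp only [mem_filter, mem_range, Set.mem_iUnion, mem_coe] at hy
    obtain ⟨hyb, n, hnP, hyn⟩ := hy
    have hnm : n < m := by
      rcases lt_trichotomy n m with h | rfl | h
      · exact h
      · exact absurd hnP hmP
      · exact absurd (lt_of_mem_block hsucc hne hm h hb hyn) (by omega)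
    exact mem_biUnion.mpr ⟨n, mem_Ico.mpr ⟨hP n hnP, hnm⟩, hyn⟩
  rw [Nat.count_eq_card_filter_range]
  exact (card_le_card hsub).trans card_biUnion_le

end Blocks

section Intervals

variable {F G : ℕ → Finset ℕ}

lemma union_lt_union_succ (hGne : ∀ n, 1 ≤ n → (G n).Nonempty)
    (hFG : ∀ n, 1 ≤ n → ∀ a ∈ F n, ∀ b ∈ G n, a < b)
    (hGF : ∀ n, 1 ≤ n → ∀ a ∈ G n, ∀ b ∈ F (n + 1), a < b)
    (hcard : ∀ n, 2 ≤ n → (F n).card = ∑ m ∈ Ico 1 n, ((F m).card + (G m).card))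
    (n : ℕ) (hn : 1 ≤ n) : ∀ a ∈ F n ∪ G n, ∀ b ∈ F (n + 1) ∪ G (n + 1), a < b := by
  have hFne : (F (n + 1)).Nonempty := by
    rw [← card_pos, hcard (n + 1) (by omega)]
    calc 0 < (G 1).card := card_pos.mpr (hGne 1 le_rfl)
      _ ≤ (F 1).card + (G 1).card := Nat.le_add_left _ _
      _ ≤ ∑ i ∈ Ico 1 (n + 1), ((F i).card + (G i).card) :=
        single_le_sum (f := fun i => (F i).card + (G i).card) (fun _ _ => Nat.zero_le _)
          (mem_Ico.mpr ⟨le_rfl, by omega⟩)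
  exact union_lt_union_of_lt (hFG n hn) (hGF n hn) (hFG (n + 1) (by omega)) (hGne n hn) hFne

lemma sum_card_union_le_card
    (hcard : ∀ n, 2 ≤ n → (F n).card = ∑ m ∈ Ico 1 n, ((F m).card + (G m).card))
    {m : ℕ} (hm : 1 ≤ m) : ∑ n ∈ Ico 1 m, (F n ∪ G n).card ≤ (F m).card := by
  rcases hm.eq_or_lt with rfl | hm
  · simp
  · rw [hcard m hm]
    exact sum_le_sum fun n _ => card_union_le _ _

end Intervals

theorem mpb_diff_le_GLindex_general (F G : ℕ → Finset ℕ)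
    (hInt : ∀ n, 1 ≤ n → (∃ a b, F n = Finset.Icc a b) ∧ ∃ a b, G n = Finset.Icc a b)
    (hGmax : ∀ n, 1 ≤ n → ∃ H : Fin n → Finset ℕ, (∀ i, IsMaxSchreier (H i)) ∧
      (∀ i j : Fin n, i < j → ∀ a ∈ H i, ∀ b ∈ H j, a < b) ∧
      G n = Finset.univ.biUnion H)
    (hFG : ∀ n, 1 ≤ n → ∀ a ∈ F n, ∀ b ∈ G n, a < b)
    (hGF : ∀ n, 1 ≤ n → ∀ a ∈ G n, ∀ b ∈ F (n + 1), a < b)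
    (hcard : ∀ n, 2 ≤ n → (F n).card = ∑ m ∈ Finset.Ico 1 n, ((F m).card + (G m).card))
    (M N : Set ℕ) (hN : N.Infinite)
    (hN1 : ∀ n ∈ N, 1 ≤ n) :
    ∀ m ∈ M \ N, (m : ℕ∞) ≤
      GLindex (⋃ n ∈ M, ↑(F n ∪ G n)) (⋃ n ∈ N, ↑(F n ∪ G n)) := by
  classical
  rintro m ⟨hmM, hmN⟩
  rcases Nat.eq_zero_or_pos m with rfl | hm
  · simp
  have hGne : ∀ n, 1 ≤ n → (G n).Nonempty := fun n hn => by
    obtain ⟨H, hH, -, hGH⟩ := hGmax n hn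
    exact hGH ▸ (hH ⟨0, hn⟩).1.mono (subset_biUnion_of_mem H (mem_univ _))
  have hsucc := union_lt_union_succ hGne hFG hGF hcard
  have hne : ∀ n, 1 ≤ n → (F n ∪ G n).Nonempty := fun n hn => (hGne n hn).mono subset_union_right
  obtain ⟨-, a, b, hGm⟩ := hInt m hm
  have hab : a ≤ b := nonempty_Icc.mp (hGm ▸ hGne m hm)
  set LM : Set ℕ := ⋃ n ∈ M, ↑(F n ∪ G n)
  set LN : Set ℕ := ⋃ n ∈ N, ↑(F n ∪ G n)
  have hcountN : Nat.count (· ∈ LN) (b + 1) ≤ Nat.count (· ∈ LM) a := calc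
    _ ≤ ∑ n ∈ Ico 1 m, (F n ∪ G n).card :=
      count_biUnion_block_le hsucc hne hN1 hm hmN (mem_union_right _ (by simp [hGm, hab]))
    _ ≤ (F m).card := sum_card_union_le_card hcard hm
    _ ≤ Nat.count (· ∈ LM) a := card_le_count fun x hx => ⟨hFG m hm x hx a (by simp [hGm, hab]),
      Set.mem_biUnion hmM (mem_coe.mpr (mem_union_left _ hx))⟩
  set J := (range (b + 1 - a)).image (Nat.count (· ∈ LM) a + ·)
  have hJM : subImage LM J = G m := hGm ▸ subImage_image_count_add fun x hx =>
    Set.mem_biUnion hmM (mem_coe.mpr (mem_union_right _ (hGm ▸ hx)))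
  have hJN : IsSchreier (subImage LN J) :=
    isSchreier_subImage (infinite_biUnion_block hsucc hne hN) hcountN
      (fun j hj => by obtain ⟨i, -, rfl⟩ := mem_image.mp hj; omega)
      (card_image_le.trans (by simp))
  obtain ⟨H, hH, hHlt, hGH⟩ := hGmax m hm
  calc (m : ℕ∞) = tau1 (subImage LM J) := by
        rw [hJM, hGH, tau1_biUnion_of_isMaxSchreier hH hHlt]
    _ ≤ GLindex LM LN := le_iSup₂_of_le J hJN le_rfl

/-- With the MPB intervals Jₙ = Fₙ ∪ Gₙ and L_N = ⋃_{n∈N} Jₙ, every element of M \ N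
is at most ΓL₁(L_M, L_N). -/
theorem mpb_diff_le_GLindex (F G : ℕ → Finset ℕ) (hF1 : F 1 = ∅)
    (hInt : ∀ n, 1 ≤ n → (∃ a b, F n = Finset.Icc a b) ∧ ∃ a b, G n = Finset.Icc a b)
    (hGmax : ∀ n, 1 ≤ n → ∃ H : Fin n → Finset ℕ, (∀ i, IsMaxSchreier (H i)) ∧
      (∀ i j : Fin n, i < j → ∀ a ∈ H i, ∀ b ∈ H j, a < b) ∧
      G n = Finset.univ.biUnion H)
    (hFG : ∀ n, 1 ≤ n → ∀ a ∈ F n, ∀ b ∈ G n, a < b)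
    (hGF : ∀ n, 1 ≤ n → ∀ a ∈ G n, ∀ b ∈ F (n + 1), a < b)
    (hpos : ∀ n, 1 ≤ n → ∀ a ∈ F n ∪ G n, 1 ≤ a)
    (hcover : ∀ m : ℕ, 1 ≤ m → ∃ n, 1 ≤ n ∧ m ∈ F n ∪ G n)
    (hcard : ∀ n, 2 ≤ n → (F n).card = ∑ m ∈ Finset.Ico 1 n, ((F m).card + (G m).card))
    (M N : Set ℕ) (hM : M.Infinite) (hN : N.Infinite)
    (hM1 : ∀ m ∈ M, 1 ≤ m) (hN1 : ∀ n ∈ N, 1 ≤ n) :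
    ∀ m ∈ M \ N, (m : ℕ∞) ≤
      GLindex (⋃ n ∈ M, ↑(F n ∪ G n)) (⋃ n ∈ N, ↑(F n ∪ G n)) :=
  mpb_diff_le_GLindex_general F G hInt hGmax hFG hGF hcard M N hN hN1
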